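/- In the stochastic SAM iteration framework, let C > 0 be a constant, set the constant stepsize β_k = β := μ/(4L(1 + C⁻¹)) for all k, and suppose δ_k ≥ Cβ⁻² and 0 ≤ α_k ≤ min{1, β^{1/2}} for all k. Then for every N ≥ 1, (1/N)·Σ_{k=0}^{N−1} E[‖∇f(x_k)‖₂²] ≤ 16 D_f L(1 + C⁻¹)/(N μ²) + (L + μ⁻¹)σ²/(nL), where D_f := f(x₀) − f^low. -/

import Mathlib

open Matrix MeasureTheory Filter

/-! The descent lemma for the `L`-smooth `f`, applied to the step `-H_k g_k` with
`g_k = ∇f(x_k) + e_k`, together with (P1)–(P3) and Young's inequality, gives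
`f(x_{k+1}) ≤ f(x_k) - (βμ/4)‖∇f(x_k)‖² + (βμ/2 - β)⟪∇f(x_k), e_k⟫ + (β/(4L) + βμ/4)‖e_k‖²`;
the stepsize `β = μ/(4L(1+C⁻¹))` is what makes the curvature term `Lβ²(1+C⁻¹)` equal to `βμ/4`.
In expectation the cross term vanishes, since `∇f(x_k)` is `𝓕_k`-measurable and
`E[e_k | 𝓕_k] = 0`, and `E‖e_k‖² ≤ σ²/n`; summing over `k` telescopes. -/

/-- The Euclidean (ℓ₂) norm of a vector in `ℝ^n`. -/
noncomputable def norm2 {n : ℕ} (v : Fin n → ℝ) : ℝ := Real.sqrt (∑ i, v i ^ 2)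

section Norm2

variable {n : ℕ}

lemma norm2_eq_norm (v : Fin n → ℝ) :
    norm2 v = ‖(WithLp.toLp 2 v : EuclideanSpace ℝ (Fin n))‖ := by
  simp [norm2, EuclideanSpace.norm_eq]

lemma dotProduct_eq_inner (v w : Fin n → ℝ) :
    v ⬝ᵥ w = inner ℝ (WithLp.toLp 2 v : EuclideanSpace ℝ (Fin n)) (WithLp.toLp 2 w) := by
  simp [EuclideanSpace.inner_toLp_toLp, dotProduct_comm]

lemma norm2_nonneg (v : Fin n → ℝ) : 0 ≤ norm2 v := Real.sqrt_nonneg _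

lemma norm2_neg (v : Fin n → ℝ) : norm2 (-v) = norm2 v := by
  simp [norm2_eq_norm]

lemma norm2_smul (t : ℝ) (v : Fin n → ℝ) : norm2 (t • v) = |t| * norm2 v := by
  simp [norm2_eq_norm, norm_smul]

lemma dotProduct_le_norm2_mul_norm2 (v w : Fin n → ℝ) : v ⬝ᵥ w ≤ norm2 v * norm2 w := by
  simpa only [dotProduct_eq_inner, norm2_eq_norm] using real_inner_le_norm _ _

lemma abs_dotProduct_le_norm2_mul_norm2 (v w : Fin n → ℝ) : |v ⬝ᵥ w| ≤ norm2 v * norm2 w := by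
  simpa only [dotProduct_eq_inner, norm2_eq_norm] using abs_real_inner_le_norm _ _

lemma norm2_add_sq (v w : Fin n → ℝ) :
    norm2 (v + w) ^ 2 = norm2 v ^ 2 + 2 * (v ⬝ᵥ w) + norm2 w ^ 2 := by
  simpa only [dotProduct_eq_inner, norm2_eq_norm, WithLp.toLp_add] using norm_add_sq_real _ _

end Norm2

lemma image_one_le_of_hasDerivAt_le_add_mul {φ φ' : ℝ → ℝ} {a K : ℝ}
    (hφ : ∀ t ∈ Set.Icc (0 : ℝ) 1, HasDerivAt φ (φ' t) t)
    (hφ' : ∀ t ∈ Set.Icc (0 : ℝ) 1, φ' t ≤ a + K * t) :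
    φ 1 ≤ φ 0 + a + K / 2 := by
  set ψ : ℝ → ℝ := fun t => φ t - (a * t + K / 2 * t ^ 2)
  have hψ : ∀ t ∈ Set.Icc (0 : ℝ) 1, HasDerivAt ψ (φ' t - (a + K * t)) t := by
    intro t ht
    refine ((hφ t ht).sub (((hasDerivAt_id' t).const_mul a).add
      ((hasDerivAt_pow 2 t).const_mul (K / 2)))).congr_deriv ?_
    norm_num
    ring
  have hanti : AntitoneOn ψ (Set.Icc 0 1) :=
    antitoneOn_of_hasDerivWithinAt_nonpos (convex_Icc 0 1)
      (fun t ht => (hψ t ht).continuousAt.continuousWithinAt)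
      (fun t ht => (hψ t (interior_subset ht)).hasDerivWithinAt)
      (fun t ht => sub_nonpos.2 (hφ' t (interior_subset ht)))
  have hψ10 := hanti (Set.left_mem_Icc.2 zero_le_one) (Set.right_mem_Icc.2 zero_le_one) zero_le_one
  simp only [ψ] at hψ10
  linarith

section Smooth

variable {d : ℕ} {L : ℝ} {f : (Fin d → ℝ) → ℝ} {gradf : (Fin d → ℝ) → (Fin d → ℝ)}

lemma continuous_of_fderiv_apply_eq_dotProduct (hf : ContDiff ℝ 1 f)
    (hgrad : ∀ x v, fderiv ℝ f x v = gradf x ⬝ᵥ v) : Continuous gradf := by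
  refine continuous_pi fun i => ?_
  have hcoord : (fun y => gradf y i) = fun y => fderiv ℝ f y (Pi.single i 1) := by
    funext y
    simp [hgrad]
  rw [hcoord]
  exact (hf.continuous_fderiv one_ne_zero).clm_apply continuous_const

lemma descent_lemma (hf : Differentiable ℝ f) (hgrad : ∀ x v, fderiv ℝ f x v = gradf x ⬝ᵥ v)
    (hLip : ∀ x y, norm2 (gradf x - gradf y) ≤ L * norm2 (x - y)) (x v : Fin d → ℝ) :
    f (x + v) ≤ f x + gradf x ⬝ᵥ v + L / 2 * norm2 v ^ 2 := by
  have hφ (t : ℝ) : HasDerivAt (fun s => f (x + s • v)) (gradf (x + t • v) ⬝ᵥ v) t := by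
    have hline : HasDerivAt (fun s : ℝ => x + s • v) v t := by
      simpa using ((hasDerivAt_id t).smul_const v).const_add x
    simpa [Function.comp_def, hgrad] using (hf (x + t • v)).hasFDerivAt.comp_hasDerivAt t hline
  have hφ' : ∀ t ∈ Set.Icc (0 : ℝ) 1,
      gradf (x + t • v) ⬝ᵥ v ≤ gradf x ⬝ᵥ v + L * norm2 v ^ 2 * t := by
    intro t ht
    have hLip_t : norm2 (gradf (x + t • v) - gradf x) ≤ L * (t * norm2 v) := by
      simpa [norm2_smul, abs_of_nonneg ht.1] using hLip (x + t • v) x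
    calc gradf (x + t • v) ⬝ᵥ v
        = gradf x ⬝ᵥ v + (gradf (x + t • v) - gradf x) ⬝ᵥ v := by rw [sub_dotProduct]; ring
      _ ≤ gradf x ⬝ᵥ v + norm2 (gradf (x + t • v) - gradf x) * norm2 v := by
        gcongr
        exact dotProduct_le_norm2_mul_norm2 _ _
      _ ≤ gradf x ⬝ᵥ v + L * (t * norm2 v) * norm2 v := by
        grw [hLip_t]; exact norm2_nonneg v
      _ = gradf x ⬝ᵥ v + L * norm2 v ^ 2 * t := by ring
  have hφ10 := image_one_le_of_hasDerivAt_le_add_mul (fun t _ => hφ t) hφ'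
  simp only [one_smul, zero_smul, add_zero] at hφ10
  linarith

lemma descent_step (hf : Differentiable ℝ f) (hgrad : ∀ x v, fderiv ℝ f x v = gradf x ⬝ᵥ v)
    (hLip : ∀ x y, norm2 (gradf x - gradf y) ≤ L * norm2 (x - y)) (hL : 0 ≤ L)
    {b c K A : ℝ} (hc : 0 < c) (x g : Fin d → ℝ) (H : Matrix (Fin d) (Fin d) ℝ)
    (h1 : c * norm2 (gradf x) ^ 2 ≤ gradf x ⬝ᵥ H *ᵥ gradf x)
    (h2 : norm2 (H *ᵥ g) ^ 2 ≤ K * norm2 g ^ 2)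
    (h3 : norm2 ((b • 1 - H) *ᵥ (g - gradf x)) ≤ A * norm2 (g - gradf x)) :
    f (x + H *ᵥ (-g)) ≤ f x - (c / 2 - L * K / 2) * norm2 (gradf x) ^ 2
      + (L * K - b) * (gradf x ⬝ᵥ (g - gradf x))
      + (A ^ 2 / (2 * c) + L * K / 2) * norm2 (g - gradf x) ^ 2 := by
  set w := gradf x
  set e := g - w
  have hg : g = w + e := (add_sub_cancel w g).symm
  have hlin : w ⬝ᵥ H *ᵥ (-g) = -(w ⬝ᵥ H *ᵥ w) + w ⬝ᵥ ((b • 1 - H) *ᵥ e) - b * (w ⬝ᵥ e) := by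
    rw [hg, sub_mulVec, smul_mulVec, one_mulVec, mulVec_neg, mulVec_add]
    simp only [dotProduct_neg, dotProduct_add, dotProduct_sub, dotProduct_smul, smul_eq_mul]
    ring
  have hcross : w ⬝ᵥ ((b • 1 - H) *ᵥ e) ≤ c / 2 * norm2 w ^ 2 + A ^ 2 / (2 * c) * norm2 e ^ 2 := by
    have hyoung :
        norm2 w * (A * norm2 e) ≤ c / 2 * norm2 w ^ 2 + A ^ 2 / (2 * c) * norm2 e ^ 2 := by
      rw [div_mul_eq_mul_div, ← sub_nonneg]
      have : 0 ≤ (c * norm2 w - A * norm2 e) ^ 2 / (2 * c) := by positivity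
      convert this using 1
      field_simp
      ring
    calc w ⬝ᵥ ((b • 1 - H) *ᵥ e) ≤ norm2 w * norm2 ((b • 1 - H) *ᵥ e) :=
          dotProduct_le_norm2_mul_norm2 _ _
      _ ≤ norm2 w * (A * norm2 e) := by gcongr; exact norm2_nonneg w
      _ ≤ _ := hyoung
  have hquad : L / 2 * norm2 (H *ᵥ (-g)) ^ 2
      ≤ L * K / 2 * (norm2 w ^ 2 + 2 * (w ⬝ᵥ e) + norm2 e ^ 2) := by
    rw [mulVec_neg, norm2_neg, ← norm2_add_sq, ← hg]
    linarith [mul_le_mul_of_nonneg_left h2 (by positivity : 0 ≤ L / 2)]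
  have hdesc := descent_lemma hf hgrad hLip x (H *ᵥ (-g))
  linarith

end Smooth

section SAMParameters

variable {α b C δ : ℝ}

lemma sam_P2_coeff_le (hb : 0 < b) (hC : 0 < C) (hα0 : 0 ≤ α) (hα1 : α ≤ 1)
    (hδ : C / b ^ 2 ≤ δ) :
    2 * (b ^ 2 * (1 + 2 * α ^ 2 - 2 * α) + α ^ 2 * δ⁻¹) ≤ 2 * b ^ 2 * (1 + C⁻¹) := by
  have hδinv : δ⁻¹ ≤ b ^ 2 * C⁻¹ := by
    simpa [inv_div, div_eq_mul_inv] using inv_anti₀ (by positivity) hδ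
  have hδpos : 0 < δ := (by positivity : 0 < C / b ^ 2).trans_le hδ
  have hα2δ : α ^ 2 * δ⁻¹ ≤ b ^ 2 * C⁻¹ :=
    calc α ^ 2 * δ⁻¹ ≤ 1 * δ⁻¹ := by gcongr; exact pow_le_one₀ hα0 hα1
      _ ≤ b ^ 2 * C⁻¹ := by rwa [one_mul]
  have hα2 : α ^ 2 ≤ α := pow_le_of_le_one hα0 hα1 two_ne_zero
  linarith [mul_le_mul_of_nonneg_left hα2 (sq_nonneg b)]

lemma sam_P3_coeff_sq_le (hb : 0 < b) (hC : 0 < C) (hα0 : 0 ≤ α) (hα : α ≤ √b)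
    (hδ : C / b ^ 2 ≤ δ) :
    (α * ((√δ)⁻¹ + b)) ^ 2 ≤ 2 * b ^ 3 * (1 + C⁻¹) := by
  set r := (√C)⁻¹
  have hr2 : r ^ 2 = C⁻¹ := by rw [inv_pow, Real.sq_sqrt hC.le]
  have hsqrtδ : (√δ)⁻¹ ≤ b * r := by
    have hle : √C / b ≤ √δ := by
      rw [← Real.sqrt_sq hb.le, ← Real.sqrt_div hC.le]
      exact Real.sqrt_le_sqrt hδ
    simpa [inv_div, div_eq_mul_inv] using inv_anti₀ (by positivity) hle
  have hα2 : α ^ 2 ≤ b := by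
    simpa [Real.sq_sqrt hb.le] using pow_le_pow_left₀ hα0 hα 2
  calc (α * ((√δ)⁻¹ + b)) ^ 2 = α ^ 2 * ((√δ)⁻¹ + b) ^ 2 := mul_pow _ _ _
    _ ≤ b * (b * r + b) ^ 2 := by gcongr
    _ = b ^ 3 * (r + 1) ^ 2 := by ring
    _ ≤ b ^ 3 * (2 * (1 + r ^ 2)) := by gcongr; nlinarith [sq_nonneg (r - 1)]
    _ = 2 * b ^ 3 * (1 + C⁻¹) := by rw [hr2]; ring

lemma sam_step_le {d : ℕ} {L muc : ℝ} {f : (Fin d → ℝ) → ℝ}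
    {gradf : (Fin d → ℝ) → (Fin d → ℝ)} (hf : Differentiable ℝ f)
    (hgrad : ∀ x v, fderiv ℝ f x v = gradf x ⬝ᵥ v)
    (hLip : ∀ x y, norm2 (gradf x - gradf y) ≤ L * norm2 (x - y))
    (hL : 0 < L) (hmuc : 0 < muc) (hC : 0 < C) (hb : b = muc / (4 * L * (1 + C⁻¹)))
    (hδ : C / b ^ 2 ≤ δ) (hα0 : 0 ≤ α) (hα : α ≤ min 1 √b)
    (x g : Fin d → ℝ) (H : Matrix (Fin d) (Fin d) ℝ)
    (h1 : ∀ p, b * muc * norm2 p ^ 2 ≤ p ⬝ᵥ H *ᵥ p)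
    (h2 : ∀ v, norm2 (H *ᵥ v) ^ 2
      ≤ 2 * (b ^ 2 * (1 + 2 * α ^ 2 - 2 * α) + α ^ 2 * δ⁻¹) * norm2 v ^ 2)
    (h3 : ∀ v, norm2 ((b • 1 - H) *ᵥ v) ≤ α * ((√δ)⁻¹ + b) * norm2 v) :
    f (x + H *ᵥ (-g)) ≤ f x - b * muc / 4 * norm2 (gradf x) ^ 2
      + (b * muc / 2 - b) * (gradf x ⬝ᵥ (g - gradf x))
      + (b / (4 * L) + b * muc / 4) * norm2 (g - gradf x) ^ 2 := by
  have hbpos : 0 < b := by rw [hb]; positivity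
  have hK := sam_P2_coeff_le hbpos hC hα0 (hα.trans (min_le_left _ _)) hδ
  have hA := sam_P3_coeff_sq_le hbpos hC hα0 (hα.trans (min_le_right _ _)) hδ
  have hLK : L * (2 * b ^ 2 * (1 + C⁻¹)) = b * muc / 2 := by
    rw [hb]; field_simp; ring
  have hA' : (α * ((√δ)⁻¹ + b)) ^ 2 / (2 * (b * muc)) ≤ b / (4 * L) := by
    rw [div_le_iff₀ (by positivity)]
    calc _ ≤ 2 * b ^ 3 * (1 + C⁻¹) := hA
      _ = b / (4 * L) * (2 * (b * muc)) := by rw [hb]; field_simp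
  have hstep := descent_step hf hgrad hLip hL.le (K := 2 * b ^ 2 * (1 + C⁻¹)) (by positivity)
    x g H (h1 _) ((h2 g).trans (by gcongr)) (h3 _)
  rw [hLK] at hstep
  linarith [mul_le_mul_of_nonneg_right hA' (sq_nonneg (norm2 (g - gradf x)))]

end SAMParameters

noncomputable def dotProductCLM (n : ℕ) : (Fin n → ℝ) →L[ℝ] (Fin n → ℝ) →L[ℝ] ℝ :=
  LinearMap.toContinuousLinearMap
    (LinearMap.toContinuousLinearMap.toLinearMap ∘ₗ dotProductBilin ℝ ℝ)

section Expectation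

variable {Ω : Type*} {m m0 : MeasurableSpace Ω} {μ : Measure Ω} {n : ℕ}

lemma integral_bilin_condExp {E F G : Type*} [NormedAddCommGroup E] [NormedSpace ℝ E]
    [CompleteSpace E] [NormedAddCommGroup F] [NormedSpace ℝ F] [NormedAddCommGroup G]
    [NormedSpace ℝ G] [CompleteSpace G] (B : F →L[ℝ] E →L[ℝ] G) (hm : m ≤ m0)
    [SigmaFinite (μ.trim hm)] {u : Ω → F} {g : Ω → E} (hu : AEStronglyMeasurable[m] u μ)
    (hug : Integrable (fun ω => B (u ω) (g ω)) μ) (hg : Integrable g μ) :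
    ∫ ω, B (u ω) (g ω) ∂μ = ∫ ω, B (u ω) (μ[g | m] ω) ∂μ := by
  rw [← integral_condExp hm]
  exact integral_congr_ae (condExp_bilin_of_aestronglyMeasurable_left B hu hug hg)

lemma integral_le_of_condExp_le [IsProbabilityMeasure μ] (hm : m ≤ m0) {X : Ω → ℝ} {s : ℝ}
    (hX : μ[X | m] ≤ᵐ[μ] fun _ => s) : ∫ ω, X ω ∂μ ≤ s := by
  rw [← integral_condExp hm]
  simpa using integral_mono_ae integrable_condExp (integrable_const s) hX

lemma integrable_dotProduct_of_integrable_norm2_sq {u v : Ω → Fin n → ℝ}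
    (hu : AEStronglyMeasurable u μ) (hv : AEStronglyMeasurable v μ)
    (hu2 : Integrable (fun ω => norm2 (u ω) ^ 2) μ)
    (hv2 : Integrable (fun ω => norm2 (v ω) ^ 2) μ) :
    Integrable (fun ω => u ω ⬝ᵥ v ω) μ := by
  refine ((hu2.add hv2).div_const 2).mono' ((dotProductCLM n).aestronglyMeasurable_comp₂ hu hv)
    (ae_of_all _ fun ω => ?_)
  rw [Real.norm_eq_abs, Pi.add_apply]
  nlinarith [abs_dotProduct_le_norm2_mul_norm2 (u ω) (v ω), sq_nonneg (norm2 (u ω) - norm2 (v ω))]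

lemma integral_dotProduct_sub_eq_zero_of_condExp_eq (hm : m ≤ m0) [SigmaFinite (μ.trim hm)]
    {w g : Ω → Fin n → ℝ} (hw : StronglyMeasurable[m] w) (hg : Integrable g μ)
    (hgw : μ[g | m] =ᵐ[μ] w) (hint : Integrable (fun ω => w ω ⬝ᵥ (g ω - w ω)) μ) :
    ∫ ω, w ω ⬝ᵥ (g ω - w ω) ∂μ = 0 := by
  have hw_int : Integrable w μ := integrable_condExp.congr hgw
  have hzero : μ[g - w | m] =ᵐ[μ] 0 := by
    filter_upwards [condExp_sub hg hw_int m, hgw] with ω hsub hω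
    rw [hsub, condExp_of_stronglyMeasurable hm hw hw_int, Pi.sub_apply, hω, sub_self, Pi.zero_apply]
  calc ∫ ω, w ω ⬝ᵥ (g ω - w ω) ∂μ
      = ∫ ω, dotProductCLM n (w ω) (μ[g - w | m] ω) ∂μ :=
        integral_bilin_condExp (dotProductCLM n) hm hw.aestronglyMeasurable hint (hg.sub hw_int)
    _ = 0 := by
        rw [integral_congr_ae (hzero.mono fun ω hω => by rw [hω, Pi.zero_apply, map_zero])]
        exact integral_zero Ω ℝ

lemma integral_le_of_unbiased_descent [IsProbabilityMeasure μ] (hm : m ≤ m0)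
    {F F' : Ω → ℝ} {w g : Ω → Fin n → ℝ} {a b c s : ℝ} (hc : 0 ≤ c)
    (hw : StronglyMeasurable[m] w) (hg : Integrable g μ) (hgw : μ[g | m] =ᵐ[μ] w)
    (hvar : μ[fun ω => norm2 (g ω - w ω) ^ 2 | m] ≤ᵐ[μ] fun _ => s)
    (hF : Integrable F μ) (hF' : Integrable F' μ) (hw2 : Integrable (fun ω => norm2 (w ω) ^ 2) μ)
    (he2 : Integrable (fun ω => norm2 (g ω - w ω) ^ 2) μ)
    (hstep : ∀ᵐ ω ∂μ, F' ω ≤ F ω - a * norm2 (w ω) ^ 2 + b * (w ω ⬝ᵥ (g ω - w ω))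
      + c * norm2 (g ω - w ω) ^ 2) :
    ∫ ω, F' ω ∂μ ≤ ∫ ω, F ω ∂μ - a * ∫ ω, norm2 (w ω) ^ 2 ∂μ + c * s := by
  have hwm : AEStronglyMeasurable w μ := (hw.mono hm).aestronglyMeasurable
  have hdot : Integrable (fun ω => w ω ⬝ᵥ (g ω - w ω)) μ :=
    integrable_dotProduct_of_integrable_norm2_sq hwm (hg.1.sub hwm) hw2 he2
  have hmean := integral_dotProduct_sub_eq_zero_of_condExp_eq hm hw hg hgw hdot
  have hvar' := integral_le_of_condExp_le hm hvar
  calc ∫ ω, F' ω ∂μ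
      ≤ ∫ ω, (F ω - a * norm2 (w ω) ^ 2 + b * (w ω ⬝ᵥ (g ω - w ω))
          + c * norm2 (g ω - w ω) ^ 2) ∂μ :=
        integral_mono_ae hF' (by fun_prop) hstep
    _ = ∫ ω, F ω ∂μ - a * ∫ ω, norm2 (w ω) ^ 2 ∂μ + b * ∫ ω, w ω ⬝ᵥ (g ω - w ω) ∂μ
          + c * ∫ ω, norm2 (g ω - w ω) ^ 2 ∂μ := by
        rw [integral_add (by fun_prop) (he2.const_mul c),
          integral_add (by fun_prop) (hdot.const_mul b), integral_sub hF (hw2.const_mul a),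
          integral_const_mul, integral_const_mul, integral_const_mul]
    _ ≤ ∫ ω, F ω ∂μ - a * ∫ ω, norm2 (w ω) ^ 2 ∂μ + c * s := by
        rw [hmean, mul_zero, add_zero]
        gcongr

end Expectation

lemma average_le_of_le_sub_mul_add {F G : ℕ → ℝ} {c s lo : ℝ} (hc : 0 < c)
    (hstep : ∀ k, F (k + 1) ≤ F k - c * G k + s) (hlo : ∀ k, lo ≤ F k) {N : ℕ} (hN : 0 < N) :
    (1 / (N : ℝ)) * ∑ k ∈ Finset.range N, G k ≤ (F 0 - lo) / (c * N) + s / c := by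
  have hsum : c * ∑ k ∈ Finset.range N, G k ≤ F 0 - lo + N * s :=
    calc c * ∑ k ∈ Finset.range N, G k
        ≤ ∑ k ∈ Finset.range N, (F k - F (k + 1) + s) := by
          rw [Finset.mul_sum]
          exact Finset.sum_le_sum fun k _ => by linarith [hstep k]
      _ = F 0 - F N + N * s := by
          rw [Finset.sum_add_distrib, Finset.sum_range_sub', Finset.sum_const, Finset.card_range,
            nsmul_eq_mul]
      _ ≤ F 0 - lo + N * s := by linarith [hlo N]
  have hNpos : (0 : ℝ) < N := by exact_mod_cast hN
  calc (1 / (N : ℝ)) * ∑ k ∈ Finset.range N, G k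
        = (c * ∑ k ∈ Finset.range N, G k) / (c * N) := by field_simp
    _ ≤ (F 0 - lo + N * s) / (c * N) := by gcongr
    _ = (F 0 - lo) / (c * N) + s / c := by field_simp

theorem sam_constant_stepsize_bound_general
    {Ω : Type} [m0 : MeasurableSpace Ω] (μ : Measure Ω) [IsProbabilityMeasure μ]
    (𝓕 : MeasureTheory.Filtration ℕ m0)
    (d n : ℕ)
    (σ muc L flow C : ℝ) (hmuc : muc ∈ Set.Ioo (0 : ℝ) 1)
    (hL : 0 < L) (hC : 0 < C)
    (f : (Fin d → ℝ) → ℝ) (hf : ContDiff ℝ 1 f) (hflow : ∀ x, flow ≤ f x)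
    (gradf : (Fin d → ℝ) → (Fin d → ℝ))
    (hgrad : ∀ x v, fderiv ℝ f x v = gradf x ⬝ᵥ v)
    (hLip : ∀ x y, norm2 (gradf x - gradf y) ≤ L * norm2 (x - y))
    (α β δ : ℕ → ℝ)
    (x g : ℕ → Ω → (Fin d → ℝ)) (H : ℕ → Ω → Matrix (Fin d) (Fin d) ℝ)
    (x0 : Fin d → ℝ) (hx0 : ∀ ω, x 0 ω = x0)
    (hx_meas : ∀ k, Measurable[𝓕 k] (x k))
    (hupd : ∀ k ω, x (k + 1) ω = x k ω + (H k ω).mulVec (-(g k ω)))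
    (hg_int : ∀ k, Integrable (g k) μ)
    (hg_mean : ∀ k, μ[g k | 𝓕 k] =ᵐ[μ] fun ω => gradf (x k ω))
    (hg_var_int : ∀ k, Integrable (fun ω => norm2 (g k ω - gradf (x k ω)) ^ 2) μ)
    (hg_var : ∀ k,
      μ[(fun ω => norm2 (g k ω - gradf (x k ω)) ^ 2) | 𝓕 k] ≤ᵐ[μ] fun _ => σ ^ 2 / n)
    (hP1 : ∀ k, ∀ᵐ ω ∂μ, ∀ p : Fin d → ℝ,
      β k * muc * norm2 p ^ 2 ≤ p ⬝ᵥ (H k ω).mulVec p)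
    (hP2 : ∀ k, ∀ᵐ ω ∂μ, ∀ v : Fin d → ℝ,
      norm2 ((H k ω).mulVec v) ^ 2
        ≤ 2 * (β k ^ 2 * (1 + 2 * α k ^ 2 - 2 * α k) + α k ^ 2 * (δ k)⁻¹) * norm2 v ^ 2)
    (hP3 : ∀ k, ∀ᵐ ω ∂μ, ∀ v : Fin d → ℝ,
      norm2 ((β k • (1 : Matrix (Fin d) (Fin d) ℝ) - H k ω).mulVec v)
        ≤ α k * ((Real.sqrt (δ k))⁻¹ + β k) * norm2 v)
    (hf_int : ∀ k, Integrable (fun ω => f (x k ω)) μ)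
    (hgradsq_int : ∀ k, Integrable (fun ω => norm2 (gradf (x k ω)) ^ 2) μ)
    (hβ : ∀ k, β k = muc / (4 * L * (1 + C⁻¹)))
    (hδ : ∀ k, C / β k ^ 2 ≤ δ k)
    (hα : ∀ k, 0 ≤ α k ∧ α k ≤ min 1 (Real.sqrt (β k))) :
    ∀ N : ℕ, 1 ≤ N →
      (1 / (N : ℝ)) * ∑ k ∈ Finset.range N, ∫ ω, norm2 (gradf (x k ω)) ^ 2 ∂μ ≤
        16 * (f x0 - flow) * L * (1 + C⁻¹) / ((N : ℝ) * muc ^ 2)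
          + (L + muc⁻¹) * σ ^ 2 / (n * L) := by
  intro N hN
  obtain ⟨hmuc, -⟩ := hmuc
  set b := muc / (4 * L * (1 + C⁻¹)) with hb
  have hgrad_cont := continuous_of_fderiv_apply_eq_dotProduct hf hgrad
  have hstep (k : ℕ) : ∫ ω, f (x (k + 1) ω) ∂μ ≤ ∫ ω, f (x k ω) ∂μ
      - b * muc / 4 * ∫ ω, norm2 (gradf (x k ω)) ^ 2 ∂μ
      + (b / (4 * L) + b * muc / 4) * (σ ^ 2 / n) := by
    refine integral_le_of_unbiased_descent (𝓕.le k) (b := b * muc / 2 - b) (by positivity)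
      (hgrad_cont.measurable.comp (hx_meas k)).stronglyMeasurable (hg_int k) (hg_mean k)
      (hg_var k) (hf_int k) (hf_int (k + 1)) (hgradsq_int k) (hg_var_int k) ?_
    filter_upwards [hP1 k, hP2 k, hP3 k] with ω h1 h2 h3
    rw [hupd, ← hβ k]
    exact sam_step_le (hf.differentiable one_ne_zero) hgrad hLip hL hmuc hC (hβ k) (hδ k)
      (hα k).1 (hα k).2 (x k ω) (g k ω) (H k ω) h1 h2 h3
  have hlow (k : ℕ) : flow ≤ ∫ ω, f (x k ω) ∂μ := by
    simpa using integral_mono (integrable_const flow) (hf_int k) fun ω => hflow (x k ω)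
  have hsum := average_le_of_le_sub_mul_add (by positivity) hstep hlow hN
  simp only [hx0, integral_const, probReal_univ, one_smul] at hsum
  refine hsum.trans_eq ?_
  rw [hb]
  field_simp
  ring

/-- Key bound in the proof of **Theorem 4**: with constant stepsize
`β = μ/(4L(1+C⁻¹))`, `δ_k ≥ Cβ⁻²`, `0 ≤ α_k ≤ min{1, β^{1/2}}`, for every `N ≥ 1`:
`(1/N) Σ_{k<N} E‖∇f(x_k)‖₂² ≤ 16 D_f L(1+C⁻¹)/(Nμ²) + (L+μ⁻¹)σ²/(nL)` with
`D_f = f(x₀) − f^low`. -/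
theorem sam_constant_stepsize_bound
    {Ω : Type} [m0 : MeasurableSpace Ω] (μ : Measure Ω) [IsProbabilityMeasure μ]
    (𝓕 : MeasureTheory.Filtration ℕ m0)
    (d n : ℕ) (hd : 1 ≤ d) (hn : 1 ≤ n)
    (σ muc L flow C : ℝ) (hσ : 0 < σ) (hmuc : muc ∈ Set.Ioo (0 : ℝ) 1)
    (hL : 0 < L) (hC : 0 < C)
    (f : (Fin d → ℝ) → ℝ) (hf : ContDiff ℝ 1 f) (hflow : ∀ x, flow ≤ f x)
    (gradf : (Fin d → ℝ) → (Fin d → ℝ))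
    (hgrad : ∀ x v, fderiv ℝ f x v = gradf x ⬝ᵥ v)
    (hLip : ∀ x y, norm2 (gradf x - gradf y) ≤ L * norm2 (x - y))
    (α β δ : ℕ → ℝ)
    (x g : ℕ → Ω → (Fin d → ℝ)) (H : ℕ → Ω → Matrix (Fin d) (Fin d) ℝ)
    (x0 : Fin d → ℝ) (hx0 : ∀ ω, x 0 ω = x0)
    (hx_meas : ∀ k, Measurable[𝓕 k] (x k))
    (hH_meas : ∀ k i j, Measurable[𝓕 (k + 1)] fun ω => H k ω i j)
    (hupd : ∀ k ω, x (k + 1) ω = x k ω + (H k ω).mulVec (-(g k ω)))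
    (hg_int : ∀ k, Integrable (g k) μ)
    (hg_mean : ∀ k, μ[g k | 𝓕 k] =ᵐ[μ] fun ω => gradf (x k ω))
    (hg_var_int : ∀ k, Integrable (fun ω => norm2 (g k ω - gradf (x k ω)) ^ 2) μ)
    (hg_var : ∀ k,
      μ[(fun ω => norm2 (g k ω - gradf (x k ω)) ^ 2) | 𝓕 k] ≤ᵐ[μ] fun _ => σ ^ 2 / n)
    (hP1 : ∀ k, ∀ᵐ ω ∂μ, ∀ p : Fin d → ℝ,
      β k * muc * norm2 p ^ 2 ≤ p ⬝ᵥ (H k ω).mulVec p)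
    (hP2 : ∀ k, ∀ᵐ ω ∂μ, ∀ v : Fin d → ℝ,
      norm2 ((H k ω).mulVec v) ^ 2
        ≤ 2 * (β k ^ 2 * (1 + 2 * α k ^ 2 - 2 * α k) + α k ^ 2 * (δ k)⁻¹) * norm2 v ^ 2)
    (hP3 : ∀ k, ∀ᵐ ω ∂μ, ∀ v : Fin d → ℝ,
      norm2 ((β k • (1 : Matrix (Fin d) (Fin d) ℝ) - H k ω).mulVec v)
        ≤ α k * ((Real.sqrt (δ k))⁻¹ + β k) * norm2 v)
    (hf_int : ∀ k, Integrable (fun ω => f (x k ω)) μ)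
    (hgradsq_int : ∀ k, Integrable (fun ω => norm2 (gradf (x k ω)) ^ 2) μ)
    (hgsq_int : ∀ k, Integrable (fun ω => norm2 (g k ω) ^ 2) μ)
    (hβ : ∀ k, β k = muc / (4 * L * (1 + C⁻¹)))
    (hδ : ∀ k, C / β k ^ 2 ≤ δ k)
    (hα : ∀ k, 0 ≤ α k ∧ α k ≤ min 1 (Real.sqrt (β k))) :
    ∀ N : ℕ, 1 ≤ N →
      (1 / (N : ℝ)) * ∑ k ∈ Finset.range N, ∫ ω, norm2 (gradf (x k ω)) ^ 2 ∂μ ≤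
        16 * (f x0 - flow) * L * (1 + C⁻¹) / ((N : ℝ) * muc ^ 2)
          + (L + muc⁻¹) * σ ^ 2 / (n * L) :=
  sam_constant_stepsize_bound_general (m0 := m0) μ 𝓕 d n σ muc L flow C hmuc hL hC f hf hflow gradf
    hgrad hLip α β δ x g H x0 hx0 hx_meas hupd hg_int hg_mean hg_var_int hg_var hP1 hP2 hP3 hf_int
    hgradsq_int hβ hδ hα
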